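/- arXiv:1209.4597 — 6 statements merged into one kernel-verified Lean document; each statement's English description precedes it below -/
import Mathlib

section
/- Let V be a k-vector space and φ an endomorphism of V. If W is a finite-dimensional subspace of V with φW ⊆ W and φⁿV ⊆ W for some n, then the trace of φ on V (Tate's trace) equals the ordinary trace of the restriction of φ to W. -/
/-- An endomorphism is finite potent if some power has finite-dimensional range. -/
def IsFinitePotent {k V : Type*} [Field k] [AddCommGroup V] [Module k V]
    (φ : V →ₗ[k] V) : Prop :=
  ∃ n : ℕ, FiniteDimensional k (LinearMap.range (φ ^ n))

/-- `c` is a value of Tate's trace of `φ`: the ordinary trace of the restriction of `φ` to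
any finite-dimensional `φ`-invariant subspace `W` with `φⁿ V ⊆ W` for some `n` equals `c`. -/
def TateTraceSpec {k V : Type*} [Field k] [AddCommGroup V] [Module k V]
    (φ : V →ₗ[k] V) (c : k) : Prop :=
  ∀ (W : Submodule k V) (hW : ∀ x ∈ W, φ x ∈ W), FiniteDimensional k W →
    (∃ n : ℕ, LinearMap.range (φ ^ n) ≤ W) →
    LinearMap.trace k W (φ.restrict hW) = c

open Classical in
/-- Tate's trace of a finite potent endomorphism. -/
noncomputable def tateTrace {k V : Type*} [Field k] [AddCommGroup V] [Module k V]
    (φ : V →ₗ[k] V) : k :=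
  if h : ∃ c, TateTraceSpec φ c then h.choose else 0

/-!
If `φ` maps a finite-dimensional subspace `P` into an invariant subspace `p ≤ P`, the traces of
`φ` on `P` and on `p` agree (`LinearMap.trace_restrict_eq_of_forall_mem`). When only
`φⁿ P ≤ p`, each step of the chain `P ≥ p ⊔ φ P ≥ p ⊔ φ² P ≥ ⋯ ≥ p ⊔ φⁿ P = p` is of that kind.
If `W` and `W'` are finite-dimensional, `φ`-invariant and contain some `φⁿ V`, then so is
`W ⊓ W'`, so `W` and `W'` give the same trace, which is therefore Tate's trace.
-/

section

open LinearMap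

variable {k V : Type*} [Field k] [AddCommGroup V] [Module k V]

lemma trace_restrict_eq_of_forall_mem_of_le {φ : V →ₗ[k] V} {p P : Submodule k V}
    [FiniteDimensional k P] (hpP : p ≤ P) (hφ : ∀ x ∈ P, φ x ∈ p)
    (hP : ∀ x ∈ P, φ x ∈ P := fun x hx ↦ hpP (hφ x hx))
    (hp : ∀ x ∈ p, φ x ∈ p := fun x hx ↦ hφ x (hpP hx)) :
    trace k p (φ.restrict hp) = trace k P (φ.restrict hP) := by
  have hφ' : ∀ x, φ.restrict hP x ∈ p.comap P.subtype := fun x ↦ hφ x x.2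
  rw [← trace_restrict_eq_of_forall_mem _ _ hφ',
    ← trace_conj' _ (Submodule.comapSubtypeEquivOfLe hpP)]
  -- conjugating the restriction to `p.comap P.subtype` yields the restriction to `p` on the nose
  rfl

lemma trace_restrict_eq_of_forall_pow_mem {φ : V →ₗ[k] V} {p P : Submodule k V}
    [FiniteDimensional k P] (hpP : p ≤ P) (hp : ∀ x ∈ p, φ x ∈ p) (hP : ∀ x ∈ P, φ x ∈ P)
    {n : ℕ} (hn : ∀ x ∈ P, (φ ^ n) x ∈ p) :
    trace k p (φ.restrict hp) = trace k P (φ.restrict hP) := by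
  induction n generalizing P with
  | zero =>
    obtain rfl : p = P := hpP.antisymm fun x hx ↦ hn x hx
    rfl
  | succ n ih =>
    set P' := p ⊔ P.map φ
    have hφP' : ∀ x ∈ P, φ x ∈ P' := fun x hx ↦ Submodule.mem_sup_right ⟨x, hx, rfl⟩
    have hP'P : P' ≤ P := sup_le hpP (Submodule.map_le_iff_le_comap.2 hP)
    have : FiniteDimensional k P' := Submodule.finiteDimensional_of_le hP'P
    have hnP' : ∀ x ∈ P', (φ ^ n) x ∈ p := by
      intro x hx
      obtain ⟨y, hy, _, ⟨z, hz, rfl⟩, rfl⟩ := Submodule.mem_sup.1 hx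
      rw [map_add, ← Module.End.mul_apply, ← pow_succ]
      exact add_mem (Module.End.pow_apply_mem_of_forall_mem n hp y hy) (hn z hz)
    rw [ih le_sup_left (fun x hx ↦ hφP' x (hP'P hx)) hnP',
      trace_restrict_eq_of_forall_mem_of_le hP'P hφP']

lemma tateTraceSpec_trace_restrict {φ : V →ₗ[k] V} {W : Submodule k V}
    (hW : ∀ x ∈ W, φ x ∈ W) [FiniteDimensional k W] {n : ℕ}
    (hn : LinearMap.range (φ ^ n) ≤ W) :
    TateTraceSpec φ (trace k W (φ.restrict hW)) := by
  rintro W' hW' hW'fd ⟨n', hn'⟩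
  have hinf : ∀ x ∈ W ⊓ W', φ x ∈ W ⊓ W' := fun x hx ↦ ⟨hW x hx.1, hW' x hx.2⟩
  have hpow : ∀ x, (φ ^ (n + n')) x ∈ W ⊓ W' := fun x ↦
    ⟨hn ⟨(φ ^ n') x, by rw [pow_add]; rfl⟩, hn' ⟨(φ ^ n) x, by rw [add_comm, pow_add]; rfl⟩⟩
  rw [← trace_restrict_eq_of_forall_pow_mem inf_le_right hinf hW' fun x _ ↦ hpow x,
    trace_restrict_eq_of_forall_pow_mem inf_le_left hinf hW fun x _ ↦ hpow x]

lemma tateTrace_eq_of_tateTraceSpec {φ : V →ₗ[k] V} {c : k} (hc : TateTraceSpec φ c)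
    {W : Submodule k V} (hW : ∀ x ∈ W, φ x ∈ W) [FiniteDimensional k W] {n : ℕ}
    (hn : LinearMap.range (φ ^ n) ≤ W) :
    tateTrace φ = c := by
  have hex : ∃ c, TateTraceSpec φ c := ⟨c, hc⟩
  rw [tateTrace, dif_pos hex, ← hc W hW ‹_› ⟨n, hn⟩, hex.choose_spec W hW ‹_› ⟨n, hn⟩]

end

theorem tateTrace_eq_trace_restrict_general {k V : Type*} [Field k] [AddCommGroup V] [Module k V]
    (φ : V →ₗ[k] V)
    (W : Submodule k V) (hW : ∀ x ∈ W, φ x ∈ W) (hfd : FiniteDimensional k W)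
    (n : ℕ) (hn : LinearMap.range (φ ^ n) ≤ W) :
    tateTrace φ = LinearMap.trace k W (φ.restrict hW) :=
  tateTrace_eq_of_tateTraceSpec (tateTraceSpec_trace_restrict hW hn) hW hn

theorem tateTrace_eq_trace_restrict {k V : Type*} [Field k] [AddCommGroup V] [Module k V]
    (φ : V →ₗ[k] V) (hφ : IsFinitePotent φ)
    (W : Submodule k V) (hW : ∀ x ∈ W, φ x ∈ W) (hfd : FiniteDimensional k W)
    (n : ℕ) (hn : LinearMap.range (φ ^ n) ≤ W) :
    tateTrace φ = LinearMap.trace k W (φ.restrict hW) :=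
  tateTrace_eq_trace_restrict_general φ W hW hfd n hn
end

section
/- For a finite potent endomorphism φ of a k-vector space V, the value of the ordinary trace of φ restricted to W is independent of the choice of finite-dimensional φ-invariant subspace W with φⁿV ⊆ W for some n; hence Tate's trace is well-defined. -/
/-! If `W' ≤ W` are `φ`-stable and `φ W ⊆ W'`, the traces of `φ` on `W` and on `W'` agree,
since the induced map on `W ⧸ W'` is zero. When only `φᵐ W ⊆ W'`, the stable subspaces
`W' ⊔ φʲ W` descend from `W` to `W'` in `m` such steps. Two admissible subspaces are then
compared through their intersection, which is again admissible. -/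

namespace LinearMap

variable {k V : Type*} [Field k] [AddCommGroup V] [Module k V] (φ : V →ₗ[k] V)

theorem trace_restrict_eq_of_le_of_forall_mem {W' W : Submodule k V} [FiniteDimensional k W]
    (hle : W' ≤ W) (hW : ∀ x ∈ W, φ x ∈ W) (hW' : ∀ x ∈ W', φ x ∈ W')
    (hmaps : ∀ x ∈ W, φ x ∈ W') :
    trace k W (φ.restrict hW) = trace k W' (φ.restrict hW') := by
  have hconj : φ.restrict hW' = (Submodule.comapSubtypeEquivOfLe hle).conj
      ((φ.restrict hW).restrict fun x _ ↦ hmaps x x.2) := rfl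
  rw [hconj, trace_conj']
  exact (trace_restrict_eq_of_forall_mem (W'.comap W.subtype) (φ.restrict hW)
    fun x ↦ hmaps x x.2).symm

theorem trace_restrict_eq_of_le_of_map_pow_le {W' W : Submodule k V} [FiniteDimensional k W]
    (hle : W' ≤ W) (hW : ∀ x ∈ W, φ x ∈ W) (hW' : ∀ x ∈ W', φ x ∈ W') {m : ℕ}
    (hm : W.map (φ ^ m) ≤ W') :
    trace k W (φ.restrict hW) = trace k W' (φ.restrict hW') := by
  induction m generalizing W' with
  | zero =>
    obtain rfl : W' = W := le_antisymm hle (by simpa [Module.End.one_eq_id] using hm)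
    rfl
  | succ m ih =>
    set U := W' ⊔ W.map (φ ^ m)
    have hmapsU : U.map φ ≤ W' := by
      rw [Submodule.map_sup, ← Submodule.map_comp, ← Module.End.mul_eq_comp, ← pow_succ']
      exact sup_le (Submodule.map_le_iff_le_comap.mpr fun x hx ↦ hW' x hx) hm
    have hU : ∀ x ∈ U, φ x ∈ U := fun x hx ↦
      le_sup_left (a := W') (hmapsU (Submodule.mem_map_of_mem hx))
    have hUW : U ≤ W := by
      refine sup_le hle ?_
      rintro _ ⟨x, hx, rfl⟩
      rw [Module.End.pow_apply]
      exact Set.MapsTo.iterate (fun y hy ↦ hW y hy) m hx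
    have : FiniteDimensional k U := Submodule.finiteDimensional_of_le hUW
    rw [ih hUW hU le_sup_right, trace_restrict_eq_of_le_of_forall_mem φ le_sup_left hU hW'
      fun x hx ↦ hmapsU (Submodule.mem_map_of_mem hx)]

end LinearMap

theorem trace_restrict_independent_of_subspace_general
    {k V : Type*} [Field k] [AddCommGroup V] [Module k V]
    (φ : V →ₗ[k] V)
    (W₁ W₂ : Submodule k V) (h₁ : ∀ x ∈ W₁, φ x ∈ W₁) (h₂ : ∀ x ∈ W₂, φ x ∈ W₂)
    (hfd₁ : FiniteDimensional k W₁) (hfd₂ : FiniteDimensional k W₂)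
    (m₁ m₂ : ℕ) (hm₁ : LinearMap.range (φ ^ m₁) ≤ W₁) (hm₂ : LinearMap.range (φ ^ m₂) ≤ W₂) :
    LinearMap.trace k W₁ (φ.restrict h₁) = LinearMap.trace k W₂ (φ.restrict h₂) := by
  have h₀ : ∀ x ∈ W₁ ⊓ W₂, φ x ∈ W₁ ⊓ W₂ := fun x hx ↦ ⟨h₁ x hx.1, h₂ x hx.2⟩
  have hrange : LinearMap.range (φ ^ max m₁ m₂) ≤ W₁ ⊓ W₂ :=
    le_inf (le_trans ((LinearMap.iterateRange φ).monotone (le_max_left m₁ m₂)) hm₁)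
      (le_trans ((LinearMap.iterateRange φ).monotone (le_max_right m₁ m₂)) hm₂)
  have hmap (W : Submodule k V) : W.map (φ ^ max m₁ m₂) ≤ W₁ ⊓ W₂ :=
    LinearMap.map_le_range.trans hrange
  rw [φ.trace_restrict_eq_of_le_of_map_pow_le inf_le_left h₁ h₀ (hmap W₁),
    φ.trace_restrict_eq_of_le_of_map_pow_le inf_le_right h₂ h₀ (hmap W₂)]

theorem trace_restrict_independent_of_subspace
    {k V : Type*} [Field k] [AddCommGroup V] [Module k V]
    (φ : V →ₗ[k] V) (hφ : IsFinitePotent φ)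
    (W₁ W₂ : Submodule k V) (h₁ : ∀ x ∈ W₁, φ x ∈ W₁) (h₂ : ∀ x ∈ W₂, φ x ∈ W₂)
    (hfd₁ : FiniteDimensional k W₁) (hfd₂ : FiniteDimensional k W₂)
    (m₁ m₂ : ℕ) (hm₁ : LinearMap.range (φ ^ m₁) ≤ W₁) (hm₂ : LinearMap.range (φ ^ m₂) ≤ W₂) :
    LinearMap.trace k W₁ (φ.restrict h₁) = LinearMap.trace k W₂ (φ.restrict h₂) :=
  trace_restrict_independent_of_subspace_general φ W₁ W₂ h₁ h₂ hfd₁ hfd₂ m₁ m₂ hm₁ hm₂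
end

section
/- An endomorphism φ of a k-vector space V is finite potent if and only if V admits a φ-invariant direct sum decomposition V = W ⊕ U such that W is finite-dimensional, φ|_W : W → W is an isomorphism, and φ|_U is nilpotent (locally: equivalently the restriction to U is nilpotent as an operator, i.e. some power of φ vanishes on U). -/
/-! Past a finite-dimensional `range (φ ^ n)` the ranges `range (φ ^ m)` can only shrink finitely
often, so `range (φ ^ (N + 1)) = range (φ ^ N)` for some `N`. Then `φ` maps `W = range (φ ^ N)`
onto itself, hence bijectively as `W` is finite-dimensional, and `V = W ⊕ ker (φ ^ N)`.
Conversely, `range (φ ^ n)` lies in `W` as soon as `φ ^ n` kills `U`. -/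

open LinearMap

namespace Module.End

section Ring

variable {R M : Type*} [Ring R] [AddCommGroup M] [Module R M] (f : Module.End R M)

theorem apply_mem_range_pow (n : ℕ) {x : M} (hx : x ∈ range (f ^ n)) :
    f x ∈ range (f ^ n) := by
  obtain ⟨y, rfl⟩ := hx
  exact ⟨f y, by rw [← mul_apply, ← mul_apply, (Commute.self_pow f n).eq]⟩

theorem apply_mem_ker_pow (n : ℕ) {x : M} (hx : x ∈ ker (f ^ n)) : f x ∈ ker (f ^ n) := by
  rw [mem_ker, ← mul_apply, ← (Commute.self_pow f n).eq, mul_apply, mem_ker.mp hx, map_zero]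

theorem restrict_range_pow_surjective {N : ℕ} (h : range (f ^ (N + 1)) = range (f ^ N)) :
    Function.Surjective (f.restrict (fun _ ↦ f.apply_mem_range_pow N)) := by
  rintro ⟨x, hx⟩
  obtain ⟨y, rfl⟩ : x ∈ range (f ^ (N + 1)) := h ▸ hx
  exact ⟨⟨(f ^ N) y, mem_range_self _ y⟩, Subtype.ext <| by
    change f ((f ^ N) y) = (f ^ (N + 1)) y
    rw [pow_succ', mul_apply]⟩

theorem isCompl_ker_pow_of_restrict_bijective {W : Submodule R M} (hW : ∀ x ∈ W, f x ∈ W)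
    (hbij : Function.Bijective (f.restrict hW)) {N : ℕ} (hle : range (f ^ N) ≤ W) :
    IsCompl W (ker (f ^ N)) := by
  have hbijN : Function.Bijective ((f ^ N).restrict (pow_apply_mem_of_forall_mem N hW)) := by
    rw [← pow_restrict, coe_pow]
    exact hbij.iterate N
  constructor
  · rw [Submodule.disjoint_def]
    intro x hxW hxK
    have h0 : (f ^ N).restrict (pow_apply_mem_of_forall_mem N hW) ⟨x, hxW⟩ = 0 :=
      Subtype.ext (mem_ker.mp hxK)
    exact congrArg Subtype.val (hbijN.1 (h0.trans (map_zero _).symm))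
  · rw [codisjoint_iff, Submodule.eq_top_iff']
    intro v
    obtain ⟨⟨w, hw⟩, hwv⟩ := hbijN.2 ⟨(f ^ N) v, hle (mem_range_self _ v)⟩
    have hfw : (f ^ N) w = (f ^ N) v := congrArg Subtype.val hwv
    refine Submodule.mem_sup.mpr ⟨w, hw, v - w, ?_, add_sub_cancel w v⟩
    rw [mem_ker, map_sub, hfw, sub_self]

theorem range_pow_le_of_isCompl {W U : Submodule R M} (hWU : IsCompl W U)
    (hW : ∀ x ∈ W, f x ∈ W) {n : ℕ} (hU : ∀ u ∈ U, (f ^ n) u = 0) :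
    range (f ^ n) ≤ W := by
  rintro _ ⟨v, rfl⟩
  obtain ⟨w, hw, u, hu, rfl⟩ :=
    Submodule.mem_sup.mp (hWU.sup_eq_top ▸ Submodule.mem_top (x := v))
  rw [map_add, hU u hu, add_zero]
  exact pow_apply_mem_of_forall_mem n hW w hw

end Ring

theorem exists_range_pow_succ_eq {K V : Type*} [DivisionRing K] [AddCommGroup V] [Module K V]
    {f : Module.End K V} {n : ℕ} (hn : FiniteDimensional K (range (f ^ n))) :
    ∃ N, FiniteDimensional K (range (f ^ N)) ∧ range (f ^ (N + 1)) = range (f ^ N) := by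
  induction h : Module.finrank K (range (f ^ n)) using Nat.strong_induction_on generalizing n
    with | _ d ih =>
  have hle : range (f ^ (n + 1)) ≤ range (f ^ n) := f.iterateRange.monotone n.le_succ
  rcases hle.eq_or_lt with heq | hlt
  · exact ⟨n, hn, heq⟩
  · exact ih _ (h ▸ Submodule.finrank_lt_finrank_of_lt hlt)
      (Submodule.finiteDimensional_of_le hle) rfl

end Module.End

theorem isFinitePotent_iff_invariant_decomposition
    {k V : Type*} [Field k] [AddCommGroup V] [Module k V] (φ : V →ₗ[k] V) :
    IsFinitePotent φ ↔
      ∃ (W U : Submodule k V) (hW : ∀ x ∈ W, φ x ∈ W),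
        IsCompl W U ∧ FiniteDimensional k W ∧ (∀ x ∈ U, φ x ∈ U) ∧
        Function.Bijective (φ.restrict hW) ∧ (∃ n : ℕ, ∀ u ∈ U, (φ ^ n) u = 0) := by
  constructor
  · rintro ⟨n, hn⟩
    obtain ⟨N, hfin, hstab⟩ := Module.End.exists_range_pow_succ_eq hn
    have hW : ∀ x ∈ range (φ ^ N), φ x ∈ range (φ ^ N) :=
      fun _ ↦ Module.End.apply_mem_range_pow φ N
    have hsurj := Module.End.restrict_range_pow_surjective φ hstab
    have hbij : Function.Bijective (φ.restrict hW) :=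
      ⟨LinearMap.injective_iff_surjective.mpr hsurj, hsurj⟩
    refine ⟨range (φ ^ N), ker (φ ^ N), hW, ?_, hfin,
      fun _ ↦ Module.End.apply_mem_ker_pow φ N, hbij, N, fun _ ↦ mem_ker.mp⟩
    exact Module.End.isCompl_ker_pow_of_restrict_bijective φ hW hbij le_rfl
  · rintro ⟨W, U, hW, hWU, hfin, -, -, n, hU⟩
    exact ⟨n, Submodule.finiteDimensional_of_le <|
      Module.End.range_pow_le_of_isCompl φ hWU hW hU⟩
end

section
/- Every finite potent endomorphism of a k-vector space is the sum of a nilpotent endomorphism and an endomorphism with finite-dimensional range. -/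
open LinearMap Submodule

/-! Split `V = W ⊕ U` with `W = range φⁿ`, and let `q` be the projection onto `U` along `W`.
Then `φ = φ q + φ (1 - q)`; the second summand has range in the finite-dimensional `W`.
Since `W` is `φ`-invariant and killed by `q`, one gets `q (φ q)ᵐ = q φᵐ`, hence
`(φ q)ⁿ⁺¹ = φ q φⁿ = 0`. -/

namespace Module.End

variable {R M : Type*} [Ring R] [AddCommGroup M] [Module R M]
  {φ q : Module.End R M} {W : Submodule R M}

theorem mul_pow_mul_eq_mul_pow (hφW : ∀ x ∈ W, φ x ∈ W) (hqW : W ≤ ker q)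
    (hq : ∀ x, x - q x ∈ W) (m : ℕ) : q * φ ^ m * q = q * φ ^ m := by
  ext x
  have hmem : (φ ^ m) (x - q x) ∈ W := pow_apply_mem_of_forall_mem m hφW _ (hq x)
  have hzero : q ((φ ^ m) (x - q x)) = 0 := hqW hmem
  rw [map_sub, map_sub, sub_eq_zero] at hzero
  exact hzero.symm

theorem mul_mul_pow_eq_mul_pow (hφW : ∀ x ∈ W, φ x ∈ W) (hqW : W ≤ ker q)
    (hq : ∀ x, x - q x ∈ W) (m : ℕ) : q * (φ * q) ^ m = q * φ ^ m := by
  induction m with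
  | zero => simp
  | succ m ih =>
    calc q * (φ * q) ^ (m + 1) = q * (φ * q) ^ m * φ * q := by simp only [pow_succ, mul_assoc]
      _ = q * φ ^ (m + 1) * q := by rw [ih, pow_succ, mul_assoc q]
      _ = q * φ ^ (m + 1) := mul_pow_mul_eq_mul_pow hφW hqW hq _

theorem isNilpotent_mul_of_range_pow_le (hφW : ∀ x ∈ W, φ x ∈ W) (hqW : W ≤ ker q)
    (hq : ∀ x, x - q x ∈ W) {n : ℕ} (hn : range (φ ^ n) ≤ W) : IsNilpotent (φ * q) := by
  have hqφn : q * φ ^ n = 0 := LinearMap.ext fun x => hqW (hn (mem_range_self _ x))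
  refine ⟨n + 1, ?_⟩
  rw [pow_succ', mul_assoc, mul_mul_pow_eq_mul_pow hφW hqW hq, hqφn, mul_zero]

end Module.End

theorem finitePotent_eq_nilpotent_add_finiteRank
    {k V : Type*} [Field k] [AddCommGroup V] [Module k V]
    (φ : V →ₗ[k] V) (hφ : IsFinitePotent φ) :
    ∃ N F : V →ₗ[k] V, IsNilpotent N ∧ FiniteDimensional k (LinearMap.range F) ∧
      φ = N + F := by
  obtain ⟨n, hn⟩ := hφ
  set W := range (φ ^ n)
  have hφW : ∀ x ∈ W, φ x ∈ W := by
    rintro _ ⟨y, rfl⟩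
    exact ⟨φ y, LinearMap.congr_fun (Commute.self_pow φ n).eq.symm y⟩
  obtain ⟨U, hWU⟩ := W.exists_isCompl
  refine ⟨φ * U.projection W hWU.symm, φ * W.projection U hWU, ?_, ?_, ?_⟩
  · exact Module.End.isNilpotent_mul_of_range_pow_le hφW (ker_projection hWU.symm).ge
      (sub_projection_mem hWU.symm) le_rfl
  · refine Submodule.finiteDimensional_of_le (?_ : _ ≤ W)
    rintro _ ⟨x, rfl⟩
    exact hφW _ (projection_apply_mem hWU x)
  · rw [← mul_add, add_comm, projection_add_projection_eq_id, ← Module.End.one_eq_id, mul_one]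
end

section
/- Let V be a k-vector space with basis {e_i}_{i≥1}. The vectors v₁ = e₂, v₂ = e₂ + e₄, v₃ = e₁ + e₄, and for i ≥ 2, v_{2i} = e_{2i} + e_{2i+2}, v_{2i+1} = e_{2i−1} + e_{2i+2}, form a basis of V. -/
/-!
Each `v_j` has a leading term `e_{σ(j)}`, where `σ = leadIndex` is the permutation
`1 ↦ 2`, `2i ↦ 2i + 2`, `2i + 1 ↦ 2i - 1` of the positive integers, and its other term is the
leading term of some `v_i` with `i < j`: `v₂ = e₄ + e₂`, `v_{2i} = e_{2i+2} + e_{2i}` and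
`v_{2i+1} = e_{2i-1} + e_{2i+2}`. So the `v_j` are unitriangular with respect to the basis
`e ∘ σ`, and a unitriangular family over a well-ordered index set is again a basis.
-/

/-- The standard basis `e i = single i 1` of the space with countable basis indexed by `i ≥ 1`. -/
noncomputable def e (k : Type*) [Field k] (i : ℕ+) : ℕ+ →₀ k := Finsupp.single i 1

/-- The vectors `v₁ = e₂`, `v_{2i} = e_{2i} + e_{2i+2}`, `v_{2i+1} = e_{2i-1} + e_{2i+2}`
(for `i ≥ 1`), rewritten in terms of the index `j`. -/
noncomputable def v (k : Type*) [Field k] (j : ℕ+) : ℕ+ →₀ k :=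
  if j = 1 then e k 2
  else if Even (j : ℕ) then e k j + e k (j + 2)
  else e k (j - 2) + e k (j + 1)

open Submodule Set

section Triangular

variable {ι R M : Type*} [LinearOrder ι] [Ring R] [AddCommGroup M] [Module R M]

theorem linearIndependent_of_dual_triangular (u : ι → M) (f : ι → Module.Dual R M)
    (h_lt : ∀ i j, i < j → f j (u i) = 0) (h_self : ∀ i, f i (u i) = 1) :
    LinearIndependent R u := by
  rw [linearIndependent_iff]
  intro l hl
  by_contra hne
  have hsupp : l.support.Nonempty := Finsupp.support_nonempty_iff.mpr hne
  set j := l.support.max' hsupp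
  have hcoord : f j (Finsupp.linearCombination R u l) = l j := by
    rw [Finsupp.linearCombination_apply, Finsupp.sum, map_sum,
      Finset.sum_eq_single_of_mem j (l.support.max'_mem hsupp)]
    · simp [h_self]
    · intro i hi hij
      simp [h_lt i j (lt_of_le_of_ne (l.support.le_max' i hi) hij)]
  exact Finsupp.mem_support_iff.mp (l.support.max'_mem hsupp) (by rw [← hcoord, hl, map_zero])

theorem Module.Basis.linearIndependent_of_sub_mem_span_Iio (b : Module.Basis ι R M) {u : ι → M}
    (hu : ∀ j, u j - b j ∈ span R (b '' Iio j)) : LinearIndependent R u := by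
  have hcoord : ∀ i j, i ≤ j → b.coord j (u i) = if i = j then 1 else 0 := by
    intro i j hij
    have hzero : b.repr (u i - b i) j = 0 :=
      Finsupp.notMem_support_iff.mp fun h => (b.mem_span_image.mp (hu i) h).not_ge hij
    rw [map_sub, Finsupp.sub_apply, sub_eq_zero] at hzero
    simp [hzero, Finsupp.single_apply]
  exact linearIndependent_of_dual_triangular u b.coord
    (fun i j hij => by simp [hcoord i j hij.le, hij.ne]) (fun i => by simp [hcoord i i le_rfl])

theorem span_range_eq_of_sub_mem_span_Iio [WellFoundedLT ι] {b u : ι → M}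
    (hu : ∀ j, u j - b j ∈ span R (b '' Iio j)) : span R (range u) = span R (range b) := by
  have hb : ∀ j, b j ∈ span R (range u) := by
    intro j
    induction j using WellFoundedLT.induction with
    | ind j ih =>
      have hlow : span R (b '' Iio j) ≤ span R (range u) :=
        span_le.mpr (by rintro _ ⟨i, hi, rfl⟩; exact ih i hi)
      simpa using sub_mem (subset_span (mem_range_self j)) (hlow (hu j))
  refine le_antisymm (span_le.mpr ?_) (span_le.mpr (range_subset_iff.mpr hb))
  rintro _ ⟨j, rfl⟩
  simpa using add_mem (span_mono (image_subset_range b _) (hu j)) (subset_span (mem_range_self j))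

end Triangular

def leadIndex (j : ℕ+) : ℕ+ :=
  if j = 1 then 2 else if Even (j : ℕ) then j + 2 else j - 2

def leadIndexInv (j : ℕ+) : ℕ+ :=
  if j = 2 then 1 else if Even (j : ℕ) then j - 2 else j + 2

theorem coe_leadIndex (j : ℕ+) : (leadIndex j : ℕ) =
    if (j : ℕ) = 1 then 2 else if (j : ℕ) % 2 = 0 then (j : ℕ) + 2 else (j : ℕ) - 2 := by
  simp only [leadIndex, ← PNat.coe_eq_one_iff, Nat.even_iff]
  have := j.pos
  split_ifs <;> simp only [PNat.sub_coe, PNat.add_coe, ← PNat.coe_lt_coe, PNat.val_ofNat]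
  all_goals split_ifs <;> omega

theorem coe_leadIndexInv (j : ℕ+) : (leadIndexInv j : ℕ) =
    if (j : ℕ) = 2 then 1 else if (j : ℕ) % 2 = 0 then (j : ℕ) - 2 else (j : ℕ) + 2 := by
  simp only [leadIndexInv, ← PNat.coe_inj, PNat.val_ofNat, Nat.even_iff]
  have := j.pos
  split_ifs <;> simp only [PNat.sub_coe, PNat.add_coe, ← PNat.coe_lt_coe, PNat.val_ofNat]
  all_goals split_ifs <;> omega

def leadIndexEquiv : ℕ+ ≃ ℕ+ where
  toFun := leadIndex
  invFun := leadIndexInv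
  left_inv j := by
    apply PNat.coe_injective
    simp only [coe_leadIndex, coe_leadIndexInv]
    have := j.pos
    split_ifs <;> omega
  right_inv j := by
    apply PNat.coe_injective
    simp only [coe_leadIndex, coe_leadIndexInv]
    have := j.pos
    split_ifs <;> omega

theorem leadIndex_of_even {j : ℕ+} (hj : j ≠ 1) (heven : Even (j : ℕ)) :
    leadIndex j = j + 2 := by
  rw [leadIndex, if_neg hj, if_pos heven]

theorem leadIndex_of_odd {j : ℕ+} (hj : j ≠ 1) (hodd : Odd (j : ℕ)) :
    leadIndex j = j - 2 := by
  rw [leadIndex, if_neg hj, if_neg (Nat.not_even_iff_odd.mpr hodd)]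

theorem exists_lt_v_eq_add {k : Type*} [Field k] {j : ℕ+} (hj : j ≠ 1) :
    ∃ i < j, v k j = e k (leadIndex j) + e k (leadIndex i) := by
  have hj' : (j : ℕ) ≠ 1 := by simpa [← PNat.coe_eq_one_iff] using hj
  have hinv (i : ℕ+) : leadIndex (leadIndexInv i) = i := leadIndexEquiv.apply_symm_apply i
  rcases Nat.even_or_odd (j : ℕ) with heven | hodd
  · refine ⟨leadIndexInv j, ?_, ?_⟩
    · rw [← PNat.coe_lt_coe, coe_leadIndexInv, Nat.even_iff.mp heven]
      have := j.pos
      split_ifs <;> omega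
    · rw [v, if_neg hj, if_pos heven, hinv, leadIndex_of_even hj heven, add_comm]
  · refine ⟨leadIndexInv (j + 1), ?_, ?_⟩
    · rw [← PNat.coe_lt_coe, coe_leadIndexInv, PNat.add_coe, PNat.one_coe]
      have := Nat.odd_iff.mp hodd
      split_ifs <;> omega
    · rw [v, if_neg hj, if_neg (Nat.not_even_iff_odd.mpr hodd), hinv, leadIndex_of_odd hj hodd]

theorem v_is_basis (k : Type*) [Field k] :
    LinearIndependent k (v k) ∧ Submodule.span k (Set.range (v k)) = ⊤ := by
  set b := (Finsupp.basisSingleOne : Module.Basis ℕ+ k (ℕ+ →₀ k)).reindex leadIndexEquiv.symm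
  have hb (j : ℕ+) : b j = e k (leadIndex j) := by simp [b, e, leadIndexEquiv]
  have hv (j : ℕ+) : v k j - b j ∈ span k (b '' Iio j) := by
    rcases eq_or_ne j 1 with rfl | hj
    · simp [hb, v, leadIndex]
    · obtain ⟨i, hi, hvj⟩ := exists_lt_v_eq_add (k := k) hj
      rw [hvj, hb, add_sub_cancel_left, ← hb]
      exact subset_span (mem_image_of_mem b hi)
  exact ⟨b.linearIndependent_of_sub_mem_span_Iio hv,
    (span_range_eq_of_sub_mem_span_Iio hv).trans b.span_eq⟩
end

section
/- Let U be a k-vector space with basis {v_r}_{r≥3} and ψ the linear operator defined by ψ(v₃) = v₅, ψ(v_{4k}) = v_{4k+1} + v_{4k+3}, ψ(v_{4k+1}) = v_{4k+3}, ψ(v_{4k+2}) = v_{4k+3} − v_{4k+4} + v_{4k+5}, ψ(v_{4k+3}) = 0 for all k ≥ 1. Then ψ⁴ = 0, i.e. ψ is nilpotent of order at most 4. -/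
noncomputable def u (k : Type*) [Field k] (r : ℕ+) : {r : ℕ+ // 3 ≤ r} →₀ k :=
  if h : 3 ≤ r then Finsupp.single ⟨r, h⟩ 1 else 0

lemma ueq (k : Type*) [Field k] {a b : ℕ+} (h : (a:ℕ) = b) : u k a = u k b := by
  rw [PNat.coe_inj.mp h]

theorem psi_nilpotent_of_order_four {k : Type*} [Field k]
    (ψ : ({r : ℕ+ // 3 ≤ r} →₀ k) →ₗ[k] ({r : ℕ+ // 3 ≤ r} →₀ k))
    (h3 : ψ (u k 3) = u k 5)
    (h4k : ∀ m : ℕ+, ψ (u k (4 * m)) = u k (4 * m + 1) + u k (4 * m + 3))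
    (h4k1 : ∀ m : ℕ+, ψ (u k (4 * m + 1)) = u k (4 * m + 3))
    (h4k2 : ∀ m : ℕ+, ψ (u k (4 * m + 2)) = u k (4 * m + 3) - u k (4 * m + 4) + u k (4 * m + 5))
    (h4k3 : ∀ m : ℕ+, ψ (u k (4 * m + 3)) = 0) :
    ψ ^ 4 = 0 := by
  have P1 : ∀ m : ℕ+, ψ (ψ (u k (4 * m + 1))) = 0 := fun m => by
    rw [h4k1 m, h4k3 m]
  have P0 : ∀ m : ℕ+, ψ (ψ (ψ (u k (4 * m)))) = 0 := fun m => by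
    rw [h4k m, map_add, h4k3 m, add_zero, P1 m]
  have P2 : ∀ m : ℕ+, ψ (ψ (ψ (ψ (u k (4 * m + 2))))) = 0 := fun m => by
    have e4 : u k (4 * m + 4) = u k (4 * (m + 1)) := ueq k (by push_cast; try ring)
    have e5 : u k (4 * m + 5) = u k (4 * (m + 1) + 1) := ueq k (by push_cast; try ring)
    rw [h4k2 m, e4, e5, map_add, map_sub, h4k3 m, h4k (m+1), h4k1 (m+1)]
    simp only [map_add, map_sub, map_neg, map_zero, zero_sub, neg_add_rev, h4k3 (m+1),
      h4k1 (m+1), P1 (m+1), zero_add, add_zero, neg_zero]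
  have P3' : ψ (ψ (ψ (u k 3))) = 0 := by
    have e5 : u k 5 = u k (4 * 1 + 1) := ueq k (by push_cast; try ring)
    rw [h3, e5, P1 1]
  have key : ∀ r : {r : ℕ+ // 3 ≤ r}, (ψ ^ 4) (Finsupp.single r (1:k)) = 0 := by
    rintro ⟨r, hr⟩
    have hu : Finsupp.single (⟨r, hr⟩ : {r : ℕ+ // 3 ≤ r}) (1:k) = u k r := by
      rw [u, dif_pos hr]
    rw [hu]
    have hpow : (ψ ^ 4) (u k r) = ψ (ψ (ψ (ψ (u k r)))) := by
      simp [pow_succ, Module.End.mul_apply]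
    rw [hpow]
    have hn : 3 ≤ (r : ℕ) := hr
    have hmod := Nat.div_add_mod (r : ℕ) 4
    set q := (r : ℕ) / 4 with hq
    obtain h | h | h | h : (r:ℕ)%4 = 0 ∨ (r:ℕ)%4 = 1 ∨ (r:ℕ)%4 = 2 ∨ (r:ℕ)%4 = 3 := by omega
    · have hq1 : 0 < q := by omega
      obtain ⟨m, hm⟩ : ∃ m : ℕ+, (m : ℕ) = q := ⟨⟨q, hq1⟩, rfl⟩
      have e : u k r = u k (4 * m) := ueq k (by push_cast; omega)
      rw [e, P0, map_zero]
    · have hq1 : 0 < q := by omega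
      obtain ⟨m, hm⟩ : ∃ m : ℕ+, (m : ℕ) = q := ⟨⟨q, hq1⟩, rfl⟩
      have e : u k r = u k (4 * m + 1) := ueq k (by push_cast; omega)
      rw [e, P1, map_zero, map_zero]
    · have hq1 : 0 < q := by omega
      obtain ⟨m, hm⟩ : ∃ m : ℕ+, (m : ℕ) = q := ⟨⟨q, hq1⟩, rfl⟩
      have e : u k r = u k (4 * m + 2) := ueq k (by push_cast; omega)
      rw [e, P2]
    · rcases Nat.eq_zero_or_pos q with hq0 | hq1
      · have e : u k r = u k 3 := ueq k (by push_cast; omega)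
        rw [e, P3', map_zero]
      · obtain ⟨m, hm⟩ : ∃ m : ℕ+, (m : ℕ) = q := ⟨⟨q, hq1⟩, rfl⟩
        have e : u k r = u k (4 * m + 3) := ueq k (by push_cast; omega)
        rw [e, h4k3, map_zero, map_zero, map_zero]
  refine Finsupp.lhom_ext' fun a => LinearMap.ext_ring ?_
  simpa using key a
end
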